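/- arXiv:1602.07248 — 5 statements merged into one kernel-verified Lean document; each statement's English description precedes it below -/
import Mathlib

section
/- Let f : [0,1] → ℝ be a polynomial strictly positive on [0,1] with coefficients in a subfield K of ℝ, and a ≥ 1, b ≥ 1 integers. For each k ≥ 0, the residue at s = -(b+k)/a of the meromorphic continuation of ∫₀¹ f(t)^s t^(as+b-1) dt, which equals (1/(a·k!)) · (d^k/dt^k)[f^(-(b+k)/a)](0), is algebraic over K. -/
/-!
By induction, `(d/dt)^k f(t)^α = p_k(t) f(t)^(α - k)` wherever `f ≠ 0`, with `p_k` a polynomial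
built from `f` and `α` by ring operations and differentiation; so for `f ∈ K[X]` and `α ∈ ℚ`
the coefficients of `p_k` lie in `K`. At `t = 0` the residue is therefore
`(rational) · (element of K) · f(0)^(rational)`, and a rational power of the positive algebraic
number `f(0)` is algebraic.
-/

open Polynomial

namespace Polynomial

variable {R S : Type*} [CommRing R] [CommRing S]

/-- The polynomial `p_m` with `(d/dt)^m f(t)^α = p_m(t) f(t)^(α - m)`. -/
noncomputable def rpowDerivNumerator (f : R[X]) (α : R) : ℕ → R[X]
  | 0 => 1
  | m + 1 => derivative (rpowDerivNumerator f α m) * f +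
      C (α - m) * (rpowDerivNumerator f α m * derivative f)

theorem map_rpowDerivNumerator (φ : R →+* S) (f : R[X]) (α : R) (m : ℕ) :
    (rpowDerivNumerator f α m).map φ = rpowDerivNumerator (f.map φ) (φ α) m := by
  induction m with
  | zero => simp [rpowDerivNumerator]
  | succ m ih => simp [rpowDerivNumerator, ← ih, derivative_map]

theorem iteratedDeriv_eval_rpow (f : ℝ[X]) (α : ℝ) (m : ℕ) {t : ℝ} (ht : f.eval t ≠ 0) :
    iteratedDeriv m (fun s => f.eval s ^ α) t =
      (rpowDerivNumerator f α m).eval t * f.eval t ^ (α - m) := by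
  set U : Set ℝ := {s | f.eval s ≠ 0}
  have hU : IsOpen U := isOpen_ne_fun f.continuous continuous_const
  suffices h : ∀ m : ℕ, Set.EqOn (iteratedDeriv m (fun s => f.eval s ^ α))
      (fun s => (rpowDerivNumerator f α m).eval s * f.eval s ^ (α - m)) U from h m ht
  intro m
  induction m with
  | zero => intro s _; simp [rpowDerivNumerator]
  | succ m ih =>
    intro s hs
    have hpow := (f.hasDerivAt s).rpow_const (p := α - m) (Or.inl hs)
    rw [iteratedDeriv_succ, (ih.eventuallyEq_of_mem (hU.mem_nhds hs)).deriv_eq,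
      (((rpowDerivNumerator f α m).hasDerivAt s).fun_mul hpow).deriv]
    have hsplit : f.eval s ^ (α - m) = f.eval s ^ (α - (m + 1 : ℕ)) * f.eval s := by
      rw [Nat.cast_succ, ← sub_sub, Real.rpow_sub_one hs, div_mul_cancel₀ _ hs]
    rw [hsplit, Nat.cast_succ, ← sub_sub]
    simp only [rpowDerivNumerator, eval_add, eval_mul, eval_C]
    ring

end Polynomial

theorem IsAlgebraic.zpow {K A : Type*} [Field K] [Field A] [Algebra K A] {x : A}
    (hx : IsAlgebraic K x) (n : ℤ) : IsAlgebraic K (x ^ n) := by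
  obtain ⟨n, rfl | rfl⟩ := n.eq_nat_or_neg
  · simpa using hx.pow n
  · simpa using (hx.pow n).inv

theorem IsAlgebraic.rpow_ratCast {K : Type*} [Field K] [Algebra K ℝ] {x : ℝ}
    (hx : IsAlgebraic K x) (h0 : 0 ≤ x) (q : ℚ) : IsAlgebraic K (x ^ (q : ℝ)) := by
  refine IsAlgebraic.of_pow q.den_pos ?_
  rw [← Real.rpow_natCast, ← Real.rpow_mul h0, Rat.cast_def, div_mul_cancel₀ _ (by positivity),
    Real.rpow_intCast]
  exact hx.zpow q.num

theorem IsAlgebraic.exists_coeff_mem_subfield {L : Type*} [Field L] {K : Subfield L} {x : L}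
    (hx : IsAlgebraic K x) : ∃ P : L[X], P ≠ 0 ∧ (∀ i, P.coeff i ∈ K) ∧ P.eval x = 0 := by
  obtain ⟨p, hp0, hpx⟩ := hx
  exact ⟨p.map K.subtype, Polynomial.map_ne_zero hp0, fun i => by simp [coeff_map],
    (eval_map_algebraMap p x).trans hpx⟩

theorem stmt2_general (K : Subfield ℝ) (f : Polynomial ℝ) (hfK : ∀ i, f.coeff i ∈ K)
    (hf : ∀ t ∈ Set.Icc (0:ℝ) 1, 0 < f.eval t)
    (a b : ℤ) (k : ℕ) :
    ∃ P : Polynomial ℝ, P ≠ 0 ∧ (∀ i, P.coeff i ∈ K) ∧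
      Polynomial.eval
        ((1 / ((a : ℝ) * (Nat.factorial k))) *
          iteratedDeriv k (fun t : ℝ => f.eval t ^ (-(((b : ℝ) + k) / (a : ℝ)))) 0) P = 0 := by
  obtain ⟨g, rfl⟩ : ∃ g : K[X], g.map K.subtype = f :=
    (lifts_iff_coeff_lifts f).mpr (fun i => ⟨⟨_, hfK i⟩, rfl⟩)
  have hf0 : 0 < (g.map K.subtype).eval 0 := hf 0 (by simp)
  set q : ℚ := -((b + k) / a)
  have hq : -(((b : ℝ) + k) / a) = K.subtype q := by simp [q]
  apply IsAlgebraic.exists_coeff_mem_subfield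
  rw [hq, iteratedDeriv_eval_rpow _ _ _ hf0.ne', ← map_rpowDerivNumerator, eval_zero_map,
    map_ratCast, show (q : ℝ) - k = ((q - k : ℚ) : ℝ) by push_cast; rfl,
    show 1 / ((a : ℝ) * k.factorial) = ((1 / (a * k.factorial) : ℚ) : ℝ) by push_cast; rfl]
  exact (isAlgebraic_ratCast K _).mul <| (isAlgebraic_algebraMap _).mul <|
    (eval_zero_map K.subtype g ▸ isAlgebraic_algebraMap _).rpow_ratCast hf0.le _

/-- The residue at `s = -(b+k)/a` of the meromorphic continuation of
`∫₀¹ f(t)^s t^(as+b-1) dt`, which equals `(1/(a·k!)) · (d^k/dt^k)[f^(-(b+k)/a)](0)`,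
is algebraic over the field `K` of coefficients of `f`. -/
theorem stmt2 (K : Subfield ℝ) (f : Polynomial ℝ) (hfK : ∀ i, f.coeff i ∈ K)
    (hf : ∀ t ∈ Set.Icc (0:ℝ) 1, 0 < f.eval t)
    (a b : ℤ) (ha : 1 ≤ a) (hb : 1 ≤ b) (k : ℕ) :
    ∃ P : Polynomial ℝ, P ≠ 0 ∧ (∀ i, P.coeff i ∈ K) ∧
      Polynomial.eval
        ((1 / ((a : ℝ) * (Nat.factorial k))) *
          iteratedDeriv k (fun t : ℝ => f.eval t ^ (-(((b : ℝ) + k) / (a : ℝ)))) 0) P = 0 :=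
  stmt2_general K f hfK hf a b k
end

section
/- Let p be a positive integer, c > 0 a real number, and s₁, s₂ complex numbers with Re(s₁) > 0, Re(s₂) > 0, and set α = -(s₁+s₂). Then ∫₀¹ (y^p + c)^α y^(p s₁ - 1) dy + ∫₀¹ (1 + c x^p)^α x^(p s₂ - 1) dx = (c^(-s₂)/p) · B(s₁, s₂), where B is the Euler beta function. -/
/-!
Substituting `t = y ^ p` turns the two integrals into `p⁻¹ ∫₀¹ (t + c)^α t^(s₁-1) dt` and
`p⁻¹ ∫₀¹ (1 + c x)^α x^(s₂-1) dx`, and `t = 1/x` identifies the latter with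
`p⁻¹ ∫₁^∞ (t + c)^α t^(s₁-1) dt`. The sum is therefore `p⁻¹ ∫₀^∞ (t + c)^α t^(s₁-1) dt`, which the
scaling `t ↦ c t` reduces to `c^(-s₂) ∫₀^∞ (1 + t)^α t^(s₁-1) dt`; the substitution `t = x/(1-x)`
turns this last integral into Euler's `∫₀¹ x^(s₁-1) (1-x)^(s₂-1) dx`.
-/

open MeasureTheory Set Complex

lemma ofReal_inv_cpow {x : ℝ} (hx : 0 ≤ x) (w : ℂ) :
    ((x⁻¹ : ℝ) : ℂ) ^ w = (x : ℂ) ^ (-w) := by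
  rw [ofReal_inv, inv_cpow_ofReal_nonneg hx, cpow_neg]

lemma ofReal_pow_cpow {x : ℝ} (hx : 0 ≤ x) (n : ℕ) (w : ℂ) :
    ((x ^ n : ℝ) : ℂ) ^ w = (x : ℂ) ^ ((n : ℂ) * w) := by
  have harg : (n : ℝ) * (x : ℂ).arg = 0 := by rw [arg_ofReal_of_nonneg hx, mul_zero]
  rw [ofReal_pow, cpow_nat_mul' (by rw [harg]; linarith [Real.pi_pos])
    (by rw [harg]; exact Real.pi_pos.le)]

lemma inv_sq_eq_cpow_neg_two (z : ℂ) : (z ^ 2)⁻¹ = z ^ (-2 : ℂ) := by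
  rw [cpow_neg, cpow_two]

section ChangeOfVariables

variable {E : Type*} [NormedAddCommGroup E] [NormedSpace ℝ E]

theorem integral_Ioi_eq_integral_Ioc_add_integral_Ioi {f : ℝ → E} {a b : ℝ} (hab : a ≤ b)
    (hf : IntegrableOn f (Ioi a)) :
    ∫ t in Ioi a, f t = (∫ t in Ioc a b, f t) + ∫ t in Ioi b, f t := by
  rw [← Ioc_union_Ioi_eq_Ioi hab]
  exact setIntegral_union (Ioc_disjoint_Ioi le_rfl) measurableSet_Ioi
    (hf.mono_set Ioc_subset_Ioi_self) (hf.mono_set (Ioi_subset_Ioi hab))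

lemma image_div_one_sub_Ioo : (fun x : ℝ => x / (1 - x)) '' Ioo 0 1 = Ioi 0 := by
  ext y
  simp only [mem_image, mem_Ioo, mem_Ioi]
  constructor
  · rintro ⟨x, ⟨hx0, hx1⟩, rfl⟩
    exact div_pos hx0 (by linarith)
  · intro hy
    refine ⟨y / (1 + y), ⟨by positivity, (div_lt_one (by positivity)).2 (by linarith)⟩, ?_⟩
    field_simp
    ring

lemma injOn_div_one_sub_Ioo : InjOn (fun x : ℝ => x / (1 - x)) (Ioo 0 1) := by
  intro a ha b hb hab
  have ha1 : 1 - a ≠ 0 := by linarith [ha.2]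
  have hb1 : 1 - b ≠ 0 := by linarith [hb.2]
  have := (div_eq_div_iff ha1 hb1).1 hab
  linarith

lemma hasDerivAt_div_one_sub {x : ℝ} (hx : x ≠ 1) :
    HasDerivAt (fun x : ℝ => x / (1 - x)) ((1 - x) ^ 2)⁻¹ x := by
  have h1x : 1 - x ≠ 0 := sub_ne_zero.2 hx.symm
  refine ((hasDerivAt_id' x).div ((hasDerivAt_id' x).const_sub 1) h1x).congr_deriv ?_
  field_simp
  ring

theorem integrableOn_Ioi_zero_iff_comp_div_one_sub (g : ℝ → E) :
    IntegrableOn g (Ioi 0) ↔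
      IntegrableOn (fun x => ((1 - x) ^ 2)⁻¹ • g (x / (1 - x))) (Ioo 0 1) := by
  rw [← image_div_one_sub_Ioo, integrableOn_image_iff_integrableOn_abs_deriv_smul
    measurableSet_Ioo (fun x hx => (hasDerivAt_div_one_sub hx.2.ne).hasDerivWithinAt)
    injOn_div_one_sub_Ioo]
  simp only [abs_inv, abs_pow, sq_abs]

theorem integral_Ioi_zero_eq_integral_Ioo_comp_div_one_sub (g : ℝ → E) :
    ∫ t in Ioi 0, g t = ∫ x in Ioo (0 : ℝ) 1, ((1 - x) ^ 2)⁻¹ • g (x / (1 - x)) := by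
  rw [← image_div_one_sub_Ioo, integral_image_eq_integral_abs_deriv_smul
    measurableSet_Ioo (fun x hx => (hasDerivAt_div_one_sub hx.2.ne).hasDerivWithinAt)
    injOn_div_one_sub_Ioo]
  simp only [abs_inv, abs_pow, sq_abs]

theorem integral_Ioi_one_eq_integral_Ioo_comp_inv (g : ℝ → E) :
    ∫ t in Ioi (1 : ℝ), g t = ∫ x in Ioo (0 : ℝ) 1, (x ^ 2)⁻¹ • g x⁻¹ := by
  have himage : Inv.inv '' Ioo (0 : ℝ) 1 = Ioi 1 := by
    rw [image_inv_eq_inv, inv_Ioo_0_left one_pos, inv_one]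
  rw [← himage, integral_image_eq_integral_abs_deriv_smul measurableSet_Ioo
    (fun x hx => (hasDerivAt_inv hx.1.ne').hasDerivWithinAt) inv_injective.injOn]
  simp only [abs_neg, abs_inv, abs_pow, sq_abs]

theorem integral_Ioc_zero_one_comp_pow {p : ℕ} (hp : p ≠ 0) (g : ℝ → E) :
    ∫ t in Ioc (0 : ℝ) 1, g t = ∫ y in Ioc (0 : ℝ) 1, ((p : ℝ) * y ^ (p - 1)) • g (y ^ p) := by
  have himage : (· ^ p) '' Ioc (0 : ℝ) 1 = Ioc 0 1 := by
    ext z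
    simp only [mem_image, mem_Ioc]
    constructor
    · rintro ⟨y, ⟨hy0, hy1⟩, rfl⟩
      exact ⟨pow_pos hy0 p, pow_le_one₀ hy0.le hy1⟩
    · rintro ⟨hz0, hz1⟩
      exact ⟨z ^ (p⁻¹ : ℝ), ⟨by positivity, Real.rpow_le_one hz0.le hz1 (by positivity)⟩,
        Real.rpow_inv_natCast_pow hz0.le hp⟩
  conv_lhs => rw [← himage]
  rw [integral_image_eq_integral_abs_deriv_smul measurableSet_Ioc
    (fun x _ => (hasDerivAt_pow p x).hasDerivWithinAt)
    ((pow_left_strictMonoOn₀ hp).injOn.mono fun x hx => hx.1.le)]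
  refine setIntegral_congr_fun measurableSet_Ioc fun y hy => ?_
  rw [abs_of_pos (by have := hy.1; positivity)]

end ChangeOfVariables

lemma inv_sq_smul_one_add_cpow_mul_cpow_div_one_sub {x : ℝ} (hx : x ∈ Ioo (0 : ℝ) 1)
    (u v : ℂ) :
    ((1 - x) ^ 2)⁻¹ •
        (((1 + x / (1 - x) : ℝ) : ℂ) ^ (-(u + v)) * ((x / (1 - x) : ℝ) : ℂ) ^ (u - 1))
      = (x : ℂ) ^ (u - 1) * (1 - (x : ℂ)) ^ (v - 1) := by
  obtain ⟨hx0, hx1⟩ := hx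
  have hy : 0 < 1 - x := by linarith
  have hy0 : ((1 - x : ℝ) : ℂ) ≠ 0 := by exact_mod_cast hy.ne'
  have hpow : ((1 - x : ℝ) : ℂ) ^ (-2 : ℂ) * ((1 - x : ℝ) : ℂ) ^ (-(-(u + v))) *
      ((1 - x : ℝ) : ℂ) ^ (-(u - 1)) = ((1 - x : ℝ) : ℂ) ^ (v - 1) := by
    rw [← cpow_add _ _ hy0, ← cpow_add _ _ hy0]
    ring_nf
  rw [show 1 + x / (1 - x) = (1 - x)⁻¹ by field_simp; ring, div_eq_mul_inv,
    ofReal_inv_cpow hy.le, ofReal_mul, mul_cpow_ofReal_nonneg hx0.le (inv_nonneg.2 hy.le),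
    ofReal_inv_cpow hy.le, real_smul, ofReal_inv, ofReal_pow, inv_sq_eq_cpow_neg_two,
    show 1 - (x : ℂ) = ((1 - x : ℝ) : ℂ) by push_cast; rfl, ← hpow]
  ring

theorem integrableOn_Ioi_one_add_cpow_mul_cpow {u v : ℂ} (hu : 0 < u.re) (hv : 0 < v.re) :
    IntegrableOn (fun t : ℝ => ((1 + t : ℝ) : ℂ) ^ (-(u + v)) * (t : ℂ) ^ (u - 1)) (Ioi 0) := by
  rw [integrableOn_Ioi_zero_iff_comp_div_one_sub]
  exact IntegrableOn.congr_fun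
    ((intervalIntegrable_iff_integrableOn_Ioo_of_le zero_le_one).1 (betaIntegral_convergent hu hv))
    (fun x hx => (inv_sq_smul_one_add_cpow_mul_cpow_div_one_sub hx u v).symm) measurableSet_Ioo

theorem integral_Ioi_one_add_cpow_mul_cpow (u v : ℂ) :
    ∫ t in Ioi (0 : ℝ), ((1 + t : ℝ) : ℂ) ^ (-(u + v)) * (t : ℂ) ^ (u - 1) = betaIntegral u v := by
  rw [integral_Ioi_zero_eq_integral_Ioo_comp_div_one_sub,
    setIntegral_congr_fun measurableSet_Ioo
      fun x hx => inv_sq_smul_one_add_cpow_mul_cpow_div_one_sub hx u v,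
    betaIntegral, intervalIntegral.integral_of_le zero_le_one, integral_Ioc_eq_integral_Ioo]

lemma mul_add_cpow_mul_cpow_mul {c : ℝ} (hc : 0 < c) {x : ℝ} (hx : 0 ≤ x) (u v : ℂ) :
    (c : ℂ) * (((c * x + c : ℝ) : ℂ) ^ (-(u + v)) * ((c * x : ℝ) : ℂ) ^ (u - 1))
      = (c : ℂ) ^ (-v) * (((1 + x : ℝ) : ℂ) ^ (-(u + v)) * (x : ℂ) ^ (u - 1)) := by
  have hc0 : (c : ℂ) ≠ 0 := by exact_mod_cast hc.ne'
  have hpow : (c : ℂ) * (c : ℂ) ^ (-(u + v)) * (c : ℂ) ^ (u - 1) = (c : ℂ) ^ (-v) := by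
    conv_lhs => enter [1, 1]; rw [← cpow_one (c : ℂ)]
    rw [← cpow_add _ _ hc0, ← cpow_add _ _ hc0]
    ring_nf
  rw [show c * x + c = c * (1 + x) by ring, ofReal_mul,
    mul_cpow_ofReal_nonneg hc.le (by positivity), ofReal_mul, mul_cpow_ofReal_nonneg hc.le hx,
    ← hpow]
  ring

theorem integrableOn_Ioi_add_cpow_mul_cpow {u v : ℂ} (hu : 0 < u.re) (hv : 0 < v.re) {c : ℝ}
    (hc : 0 < c) :
    IntegrableOn (fun t : ℝ => ((t + c : ℝ) : ℂ) ^ (-(u + v)) * (t : ℂ) ^ (u - 1)) (Ioi 0) := by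
  have hc0 : (c : ℂ) ≠ 0 := by exact_mod_cast hc.ne'
  rw [← mul_zero c, ← integrableOn_Ioi_comp_mul_left_iff _ 0 hc,
    IntegrableOn, ← integrable_const_mul_iff (isUnit_iff_ne_zero.2 hc0)]
  exact IntegrableOn.congr_fun ((integrableOn_Ioi_one_add_cpow_mul_cpow hu hv).const_mul _)
    (fun x hx => (mul_add_cpow_mul_cpow_mul hc (le_of_lt hx) u v).symm) measurableSet_Ioi

theorem integral_Ioi_add_cpow_mul_cpow {c : ℝ} (hc : 0 < c) (u v : ℂ) :
    ∫ t in Ioi (0 : ℝ), ((t + c : ℝ) : ℂ) ^ (-(u + v)) * (t : ℂ) ^ (u - 1)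
      = (c : ℂ) ^ (-v) * betaIntegral u v := by
  rw [← mul_zero c, ← integral_comp_mul_left_Ioi' _ 0 hc, ← integral_smul]
  simp_rw [real_smul]
  rw [setIntegral_congr_fun measurableSet_Ioi
      fun x hx => mul_add_cpow_mul_cpow_mul hc (le_of_lt hx) u v,
    integral_const_mul, integral_Ioi_one_add_cpow_mul_cpow]

lemma inv_sq_smul_add_cpow_mul_cpow_inv {x : ℝ} (hx : 0 < x) {c : ℝ} (hc : 0 ≤ c) (u v : ℂ) :
    (x ^ 2)⁻¹ • (((x⁻¹ + c : ℝ) : ℂ) ^ (-(u + v)) * ((x⁻¹ : ℝ) : ℂ) ^ (u - 1))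
      = ((1 + c * x : ℝ) : ℂ) ^ (-(u + v)) * (x : ℂ) ^ (v - 1) := by
  have hx0 : (x : ℂ) ≠ 0 := by exact_mod_cast hx.ne'
  have hpow : (x : ℂ) ^ (-2 : ℂ) * (x : ℂ) ^ (-(-(u + v))) * (x : ℂ) ^ (-(u - 1))
      = (x : ℂ) ^ (v - 1) := by
    rw [← cpow_add _ _ hx0, ← cpow_add _ _ hx0]
    ring_nf
  rw [show x⁻¹ + c = (1 + c * x) * x⁻¹ by field_simp, ofReal_mul,
    mul_cpow_ofReal_nonneg (by positivity) (inv_nonneg.2 hx.le), ofReal_inv_cpow hx.le,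
    ofReal_inv_cpow hx.le, real_smul, ofReal_inv, ofReal_pow, inv_sq_eq_cpow_neg_two, ← hpow]
  ring

theorem integral_Ioi_one_add_cpow_mul_cpow_eq_integral_Ioc {c : ℝ} (hc : 0 ≤ c) (u v : ℂ) :
    ∫ t in Ioi (1 : ℝ), ((t + c : ℝ) : ℂ) ^ (-(u + v)) * (t : ℂ) ^ (u - 1)
      = ∫ x in Ioc (0 : ℝ) 1, ((1 + c * x : ℝ) : ℂ) ^ (-(u + v)) * (x : ℂ) ^ (v - 1) := by
  rw [integral_Ioi_one_eq_integral_Ioo_comp_inv, integral_Ioc_eq_integral_Ioo]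
  exact setIntegral_congr_fun measurableSet_Ioo
    fun x hx => inv_sq_smul_add_cpow_mul_cpow_inv hx.1 hc u v

lemma mul_pow_smul_mul_cpow_pow {p : ℕ} (hp : p ≠ 0) {y : ℝ} (hy : 0 < y) (z w : ℂ) :
    ((p : ℝ) * y ^ (p - 1)) • (z * ((y ^ p : ℝ) : ℂ) ^ (w - 1))
      = p * (z * (y : ℂ) ^ ((p : ℂ) * w - 1)) := by
  have hy0 : (y : ℂ) ≠ 0 := by exact_mod_cast hy.ne'
  have hpow : (y : ℂ) ^ ((p - 1 : ℕ) : ℂ) * (y : ℂ) ^ ((p : ℂ) * (w - 1))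
      = (y : ℂ) ^ ((p : ℂ) * w - 1) := by
    rw [← cpow_add _ _ hy0, Nat.cast_sub (Nat.one_le_iff_ne_zero.2 hp)]
    ring_nf
  rw [ofReal_pow_cpow hy.le, real_smul, ofReal_mul, ofReal_pow, ofReal_natCast,
    ← cpow_natCast, ← hpow]
  ring

theorem integral_Ioc_zero_one_mul_cpow_eq {p : ℕ} (hp : p ≠ 0) (F : ℝ → ℂ) (w : ℂ) :
    ∫ t in Ioc (0 : ℝ) 1, F t * (t : ℂ) ^ (w - 1)
      = p * ∫ y in Ioc (0 : ℝ) 1, F (y ^ p) * (y : ℂ) ^ ((p : ℂ) * w - 1) := by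
  rw [integral_Ioc_zero_one_comp_pow hp, ← integral_const_mul]
  exact setIntegral_congr_fun measurableSet_Ioc
    fun y hy => mul_pow_smul_mul_cpow_pow hp hy.1 _ w

/-- For `p ∈ ℤ>0`, `c > 0` and `s₁, s₂ ∈ ℂ` with positive real parts, setting
`α = -(s₁+s₂)`, one has
`∫₀¹ (y^p+c)^α y^(ps₁-1) dy + ∫₀¹ (1+cx^p)^α x^(ps₂-1) dx = (c^(-s₂)/p)·B(s₁,s₂)`,
where `B(s₁,s₂) = Γ(s₁)Γ(s₂)/Γ(s₁+s₂)` is the Euler beta function. -/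
theorem stmt3 (p : ℕ) (hp : 0 < p) (c : ℝ) (hc : 0 < c) (s₁ s₂ : ℂ)
    (h1 : 0 < s₁.re) (h2 : 0 < s₂.re) (α : ℂ) (hα : α = -(s₁ + s₂)) :
    (∫ y in Set.Ioc (0:ℝ) 1, ((y ^ p + c : ℝ) : ℂ) ^ α * (y : ℂ) ^ ((p : ℂ) * s₁ - 1)) +
      (∫ x in Set.Ioc (0:ℝ) 1, ((1 + c * x ^ p : ℝ) : ℂ) ^ α * (x : ℂ) ^ ((p : ℂ) * s₂ - 1)) =
    (c : ℂ) ^ (-s₂) / (p : ℂ) *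
      (Complex.Gamma s₁ * Complex.Gamma s₂ / Complex.Gamma (s₁ + s₂)) := by
  subst hα
  have hp0 : (p : ℂ) ≠ 0 := by exact_mod_cast hp.ne'
  have hlower := integral_Ioc_zero_one_mul_cpow_eq hp.ne'
    (fun t => ((t + c : ℝ) : ℂ) ^ (-(s₁ + s₂))) s₁
  have hupper := integral_Ioc_zero_one_mul_cpow_eq hp.ne'
    (fun x => ((1 + c * x : ℝ) : ℂ) ^ (-(s₁ + s₂))) s₂
  rw [← integral_Ioi_one_add_cpow_mul_cpow_eq_integral_Ioc hc.le] at hupper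
  have hsum := integral_Ioi_eq_integral_Ioc_add_integral_Ioi zero_le_one
    (integrableOn_Ioi_add_cpow_mul_cpow h1 h2 hc)
  rw [hlower, hupper, ← mul_add, integral_Ioi_add_cpow_mul_cpow hc,
    betaIntegral_eq_Gamma_mul_div s₁ s₂ h1 h2] at hsum
  rw [div_mul_eq_mul_div, eq_div_iff hp0, hsum]
  ring
end

section
/- Let n₁, m, n₂, q be positive integers with 1 < n₁ < m, gcd(m, n₁) = 1, n₂ > 1, gcd(q, n₂) = 1. The conductor of the numerical semigroup Γ generated by n₁n₂, mn₂, and mn₁n₂ + q equals n₂(mn₁n₂ + q) - (m + n₁)n₂ - q + 1. -/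
/-!
The semigroup is the gluing `n₂ ⟨n₁, m⟩ + ℕ g` of `⟨n₁, m⟩` along `g = m n₁ n₂ + q`, which is
coprime to `n₂` and lies in `⟨n₁, m⟩`. Gluing `⟨A⟩` (Frobenius number `f`) by `d` along such a `g`
gives Frobenius number `f d + (d - 1) g`: every `x` is `s d + r g` with `0 ≤ r < d` fixed by `x`
modulo `d`, and `x` is in the glued semigroup iff `s ∈ ⟨A⟩`, because a coefficient of `g` larger
than `r` exceeds it by a multiple of `d`, which can be moved into `⟨A⟩` since `g ∈ ⟨A⟩`.
Sylvester's `f = n₁ m - n₁ - m` then gives the conductor `f n₂ + (n₂ - 1) g + 1`.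
-/

lemma FrobeniusNumber.isLeast_conductor {f : ℕ} {s : Set ℕ} (h : FrobeniusNumber f s) :
    IsLeast {c : ℕ | ∀ x : ℕ, c ≤ x → x ∈ AddSubmonoid.closure s} (f + 1) := by
  rw [frobeniusNumber_iff] at h
  refine ⟨fun x hx => h.2 x hx, fun c hc => ?_⟩
  by_contra! hcf
  exact h.1 (hc f (by omega))

lemma mem_closure_image_mul_right_union_singleton {A : Set ℕ} {d g x : ℕ} :
    x ∈ AddSubmonoid.closure ((· * d) '' A ∪ {g}) ↔
      ∃ s ∈ AddSubmonoid.closure A, ∃ k : ℕ, s * d + k * g = x := by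
  rw [AddSubmonoid.closure_union, ← AddMonoidHom.coe_mulRight, ← AddMonoidHom.map_mclosure,
    AddSubmonoid.mem_sup]
  simp only [AddSubmonoid.mem_map, AddSubmonoid.mem_closure_singleton,
    AddMonoidHom.coe_mulRight, smul_eq_mul]
  constructor
  · rintro ⟨_, ⟨s, hs, rfl⟩, _, ⟨k, rfl⟩, rfl⟩
    exact ⟨s, hs, k, rfl⟩
  · rintro ⟨s, hs, k, rfl⟩
    exact ⟨_, ⟨s, hs, rfl⟩, _, ⟨k, rfl⟩, rfl⟩

lemma Nat.exists_lt_mul_modEq {d g : ℕ} (hd : d ≠ 0) (hdg : Nat.Coprime d g) (x : ℕ) :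
    ∃ r < d, r * g ≡ x [MOD d] := by
  have : NeZero d := ⟨hd⟩
  set u := ZMod.unitOfCoprime g hdg.symm
  refine ⟨((x : ZMod d) * ↑u⁻¹).val, ZMod.val_lt _, ?_⟩
  rw [← ZMod.natCast_eq_natCast_iff, Nat.cast_mul, ZMod.natCast_zmod_val,
    ← ZMod.coe_unitOfCoprime g hdg.symm, mul_assoc, Units.inv_mul, mul_one]

theorem FrobeniusNumber.image_mul_right_union_singleton {f d g : ℕ} {A : Set ℕ}
    (hf : FrobeniusNumber f A) (hd : d ≠ 0) (hdg : Nat.Coprime d g)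
    (hg : g ∈ AddSubmonoid.closure A) :
    FrobeniusNumber (f * d + (d - 1) * g) ((· * d) '' A ∪ {g}) := by
  rw [frobeniusNumber_iff] at hf ⊢
  simp only [mem_closure_image_mul_right_union_singleton]
  constructor
  · rintro ⟨s, hs, k, hsk⟩
    have hrel : (f + g) * d = s * d + (k + 1) * g := by
      obtain ⟨e, rfl⟩ := Nat.exists_eq_add_one_of_ne_zero hd
      simp only [Nat.add_sub_cancel] at hsk
      linarith
    obtain ⟨t, ht⟩ : d ∣ k + 1 := hdg.dvd_of_dvd_mul_right
      ((Nat.dvd_add_right (dvd_mul_left d s)).mp (hrel ▸ dvd_mul_left d _))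
    -- writing `k + 1 = d t`, the relation says `f = s + (t - 1) g`
    have hft : f + g = s + t * g := by
      apply Nat.eq_of_mul_eq_mul_right (Nat.pos_of_ne_zero hd)
      rw [hrel, ht]
      ring
    obtain ⟨t', rfl⟩ : ∃ t', t = t' + 1 :=
      Nat.exists_eq_add_one_of_ne_zero (by rintro rfl; simp at ht)
    apply hf.1
    rw [show f = s + t' * g by linarith]
    exact add_mem hs (AddSubmonoid.nsmul_mem _ hg t')
  · intro x hx
    obtain ⟨r, hrd, hr⟩ := Nat.exists_lt_mul_modEq hd hdg x
    have hrg : r * g ≤ (d - 1) * g := Nat.mul_le_mul_right g (by omega)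
    obtain ⟨y, hy⟩ := (Nat.modEq_iff_dvd' (by omega)).mp hr
    have hyf : f < y := by
      by_contra! hyf
      have : d * y ≤ f * d := by rw [mul_comm d]; exact Nat.mul_le_mul_right d hyf
      omega
    exact ⟨y, hf.2 y hyf, r, by rw [mul_comm y, ← hy]; omega⟩

theorem stmt5_general (n₁ m n₂ q : ℕ) (h1 : 1 < n₁) (h2 : n₁ < m) (hco : Nat.Coprime m n₁)
    (h3 : 1 < n₂) (hqn : Nat.Coprime q n₂) :
    ∃ c : ℕ,
      IsLeast {c : ℕ | ∀ x : ℕ, c ≤ x →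
        x ∈ AddSubmonoid.closure ({n₁ * n₂, m * n₂, m * n₁ * n₂ + q} : Set ℕ)} c ∧
      (c : ℤ) = (n₂ : ℤ) * (m * n₁ * n₂ + q) - (m + n₁) * n₂ - q + 1 := by
  have hsum : n₁ + m ≤ n₁ * m := Nat.add_le_mul h1 (h1.trans h2)
  have hpair := frobeniusNumber_pair hco.symm h1 (h1.trans h2)
  have hg : m * n₁ * n₂ + q ∈ AddSubmonoid.closure {n₁, m} := by
    refine (frobeniusNumber_iff.mp hpair).2 _ ?_
    have : n₁ * m ≤ m * n₁ * n₂ := by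
      rw [mul_comm n₁]; exact Nat.le_mul_of_pos_right _ (by omega)
    omega
  have hglue := hpair.image_mul_right_union_singleton (by omega : n₂ ≠ 0)
    ((Nat.coprime_mul_right_add_left q n₂ (m * n₁)).mpr hqn).symm hg
  rw [Set.image_pair, Set.insert_union, Set.singleton_union] at hglue
  refine ⟨_, hglue.isLeast_conductor, ?_⟩
  push_cast [Nat.sub_sub, Nat.cast_sub hsum, Nat.cast_sub h3.le]
  ring

/-- The conductor of the numerical semigroup generated by `n₁n₂`, `mn₂` and `mn₁n₂+q`
equals `n₂(mn₁n₂+q) - (m+n₁)n₂ - q + 1`. -/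
theorem stmt5 (n₁ m n₂ q : ℕ) (h1 : 1 < n₁) (h2 : n₁ < m) (hco : Nat.Coprime m n₁)
    (h3 : 1 < n₂) (hq : 0 < q) (hqn : Nat.Coprime q n₂) :
    ∃ c : ℕ,
      IsLeast {c : ℕ | ∀ x : ℕ, c ≤ x →
        x ∈ AddSubmonoid.closure ({n₁ * n₂, m * n₂, m * n₁ * n₂ + q} : Set ℕ)} c ∧
      (c : ℤ) = (n₂ : ℤ) * (m * n₁ * n₂ + q) - (m + n₁) * n₂ - q + 1 :=
  stmt5_general n₁ m n₂ q h1 h2 hco h3 hqn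
end

section
/- Let m, n₁, n₂, q be as in the two-Puiseux-pair setting (1 < n₁ < m, gcd(m,n₁)=1, n₂>1, q>0, gcd(q,n₂)=1). Define A₁ = { -(m+n₁+k)/(m n₁ n₂) : 0 ≤ k < m n₁ n₂, m ∤ (m+n₁+k), n₁ ∤ (m+n₁+k) } and A₂ = { -((m+n₁)n₂+q+k)/(n₂(m n₁ n₂+q)) : 0 ≤ k < n₂(m n₁ n₂+q), n₂ ∤ N_k, (m n₁ n₂+q) ∤ N_k } where N_k = (m+n₁)n₂+q+k. If gcd(q, n₁) = 1 or gcd(q, m) = 1, then A₁ and A₂ are disjoint. -/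
/-!
Equating the two fractions and cancelling `n₂` gives `A * (m n₁ n₂ + q) = B * m n₁`, where `A` and
`B` are the numerators. A divisor `d ∈ {n₁, m}` of `m n₁ n₂` that is coprime to `q` is coprime to
`m n₁ n₂ + q`, so it divides `A`, which the definition of `A₁` forbids.
-/

theorem Nat.Coprime.dvd_of_dvd_mul_add {q d c a : ℕ} (hqd : Nat.Coprime q d) (hdc : d ∣ c)
    (h : d ∣ a * (c + q)) : d ∣ a := by
  obtain ⟨e, rfl⟩ := hdc
  have hcop : Nat.Coprime d (d * e + q) := (Nat.coprime_mul_left_add_right d q e).mpr hqd.symm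
  exact hcop.dvd_of_dvd_mul_right h

theorem mul_add_eq_of_div_eq_div {a b c n q : ℕ} (hc : 0 < c) (hn : 0 < n)
    (h : (a : ℚ) / ((c * n : ℕ) : ℚ) = b / ((n * (c * n + q) : ℕ) : ℚ)) :
    a * (c * n + q) = b * c := by
  have hcn : 0 < c * n := Nat.mul_pos hc hn
  rw [div_eq_div_iff (by positivity) (by positivity)] at h
  have h' : a * (c * n + q) * n = b * c * n := by
    have : a * (n * (c * n + q)) = b * (c * n) := by exact_mod_cast h
    linarith
  exact Nat.eq_of_mul_eq_mul_right hn h'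

theorem stmt7_general (n₁ m n₂ q : ℕ) (h1 : 1 < n₁) (h2 : n₁ < m) (h3 : 1 < n₂)
    (hq' : Nat.Coprime q n₁ ∨ Nat.Coprime q m) :
    {x : ℚ | ∃ k : ℕ, k < m * n₁ * n₂ ∧ ¬ m ∣ (m + n₁ + k) ∧ ¬ n₁ ∣ (m + n₁ + k) ∧
        x = -(((m + n₁ + k : ℕ) : ℚ) / ((m * n₁ * n₂ : ℕ) : ℚ))} ∩
    {x : ℚ | ∃ k : ℕ, k < n₂ * (m * n₁ * n₂ + q) ∧
        ¬ n₂ ∣ ((m + n₁) * n₂ + q + k) ∧ ¬ (m * n₁ * n₂ + q) ∣ ((m + n₁) * n₂ + q + k) ∧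
        x = -((((m + n₁) * n₂ + q + k : ℕ) : ℚ) / ((n₂ * (m * n₁ * n₂ + q) : ℕ) : ℚ))} =
    ∅ := by
  ext x
  simp only [Set.mem_inter_iff, Set.mem_ofPred_eq, Set.mem_empty_iff_false, iff_false, not_and]
  rintro ⟨k₁, -, hm, hn₁, rfl⟩ ⟨k₂, -, -, -, heq⟩
  have key := mul_add_eq_of_div_eq_div (Nat.mul_pos (by omega) (by omega)) (by omega)
    (neg_inj.mp heq)
  rcases hq' with hq | hq
  · refine hn₁ (hq.dvd_of_dvd_mul_add ((dvd_mul_left n₁ m).mul_right n₂) ?_)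
    exact key ▸ dvd_mul_of_dvd_right (dvd_mul_left n₁ m) _
  · refine hm (hq.dvd_of_dvd_mul_add ((dvd_mul_right m n₁).mul_right n₂) ?_)
    exact key ▸ dvd_mul_of_dvd_right (dvd_mul_right m n₁) _

/-- Under the coprimality hypothesis on `q`, the candidate sets `A₁` and `A₂` are
disjoint. -/
theorem stmt7 (n₁ m n₂ q : ℕ) (h1 : 1 < n₁) (h2 : n₁ < m) (hco : Nat.Coprime m n₁)
    (h3 : 1 < n₂) (hq : 0 < q) (hqn : Nat.Coprime q n₂)
    (hq' : Nat.Coprime q n₁ ∨ Nat.Coprime q m) :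
    {x : ℚ | ∃ k : ℕ, k < m * n₁ * n₂ ∧ ¬ m ∣ (m + n₁ + k) ∧ ¬ n₁ ∣ (m + n₁ + k) ∧
        x = -(((m + n₁ + k : ℕ) : ℚ) / ((m * n₁ * n₂ : ℕ) : ℚ))} ∩
    {x : ℚ | ∃ k : ℕ, k < n₂ * (m * n₁ * n₂ + q) ∧
        ¬ n₂ ∣ ((m + n₁) * n₂ + q + k) ∧ ¬ (m * n₁ * n₂ + q) ∣ ((m + n₁) * n₂ + q + k) ∧
        x = -((((m + n₁) * n₂ + q + k : ℕ) : ℚ) / ((n₂ * (m * n₁ * n₂ + q) : ℕ) : ℚ))} =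
    ∅ :=
  stmt7_general n₁ m n₂ q h1 h2 h3 hq'
end

section
/- Let 1 < n₁ < m with gcd(m, n₁) = 1, n₂ > 1, q > 0 with gcd(q, n₂) = 1. Then 0 < (m+n₁)n₂+q)/(n₂(m n₁ n₂+q)) - (m+n₁)/(m n₁ n₂) < 1; equivalently, writing max A₁ = -(m+n₁)/(m n₁ n₂) and max A₂ = -((m+n₁)n₂+q)/(n₂(m n₁ n₂+q)), one has 0 < max A₁ - max A₂ < 1. -/
/-- `0 < max A₁ - max A₂ < 1`, where `max A₁ = -(m+n₁)/(mn₁n₂)` and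
`max A₂ = -((m+n₁)n₂+q)/(n₂(mn₁n₂+q))`. -/
theorem stmt9 (n₁ m n₂ q : ℕ) (h1 : 1 < n₁) (h2 : n₁ < m) (hco : Nat.Coprime m n₁)
    (h3 : 1 < n₂) (hq : 0 < q) (hqn : Nat.Coprime q n₂) :
    0 < (((m + n₁) * n₂ + q : ℕ) : ℚ) / ((n₂ * (m * n₁ * n₂ + q) : ℕ) : ℚ)
        - ((m + n₁ : ℕ) : ℚ) / ((m * n₁ * n₂ : ℕ) : ℚ) ∧
    (((m + n₁) * n₂ + q : ℕ) : ℚ) / ((n₂ * (m * n₁ * n₂ + q) : ℕ) : ℚ)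
        - ((m + n₁ : ℕ) : ℚ) / ((m * n₁ * n₂ : ℕ) : ℚ) < 1 := by
  have hb : (2:ℚ) ≤ (n₁:ℚ) := by exact_mod_cast h1
  have ha : (3:ℚ) ≤ (m:ℚ) := by
    have : 3 ≤ m := by omega
    exact_mod_cast this
  have hc : (2:ℚ) ≤ (n₂:ℚ) := by exact_mod_cast h3
  have hq' : (1:ℚ) ≤ (q:ℚ) := by exact_mod_cast hq
  push_cast
  set a : ℚ := (m:ℚ) with hA
  set b : ℚ := (n₁:ℚ) with hB
  set c : ℚ := (n₂:ℚ) with hC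
  set Q : ℚ := (q:ℚ) with hQ
  have ha0 : 0 < a := by linarith
  have hb0 : 0 < b := by linarith
  have hc0 : 0 < c := by linarith
  have hQ0 : 0 < Q := by linarith
  have hd1 : (0:ℚ) < c * (a * b * c + Q) := by positivity
  have hd2 : (0:ℚ) < a * b * c := by positivity
  have key : ((a + b) * c + Q) / (c * (a * b * c + Q)) - (a + b) / (a * b * c)
      = (Q * (a * b - a - b)) / (a * b * c * (a * b * c + Q)) := by
    field_simp
    ring
  rw [key]
  have hab : 0 < a * b - a - b := by
    nlinarith [mul_nonneg (by linarith : (0:ℚ) ≤ a - 1) (by linarith : (0:ℚ) ≤ b - 2)]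
  have hnum : 0 < Q * (a * b - a - b) := mul_pos hQ0 hab
  have hden : (0:ℚ) < a * b * c * (a * b * c + Q) := by positivity
  refine ⟨div_pos hnum hden, ?_⟩
  rw [div_lt_one hden]
  have s1 : a * b - a - b < a * b * c := by
    nlinarith [mul_nonneg (mul_nonneg ha0.le hb0.le) (by linarith : (0:ℚ) ≤ c - 1)]
  have s2 : Q * (a * b - a - b) < Q * (a * b * c) := by
    exact mul_lt_mul_of_pos_left s1 hQ0
  nlinarith [mul_pos hd2 hd2]
end
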